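/- arXiv:2408.06611 — 2 statements merged into one kernel-verified Lean document; each statement's English description precedes it below -/
import Mathlib

section
/- Fix k, n ≥ 1. For γ : Fin n → Perm(Fin k) and h ∈ Perm(Fin n), let π be the permutation of Fin (k·n) defined on the point j·k + i (0 ≤ i < k, 0 ≤ j < n) by π(j·k + i) = h(j)·k + γ_j(i). Then the number of descents decomposes exactly as d(π) = Σ_{j=0}^{n−1} d(γ_j) + d(h), where d(π) = #{ m : 0 ≤ m < k·n − 1 and π(m) > π(m+1) }, d(γ_j) = #{ i : 0 ≤ i < k − 1 and γ_j(i) > γ_j(i+1) }, and d(h) = #{ j : 0 ≤ j < n − 1 and h(j) > h(j+1) }, all comparisons being between the underlying natural numbers. -/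
open scoped BigOperators

namespace Stmt15

/-- The descent number of a permutation of `Fin m`:
`d(τ) = #{ i : 0 ≤ i < m−1, τ(i) > τ(i+1) }`, counted as the number of pairs of
consecutive positions at which `τ` decreases. -/
def descents {m : ℕ} (τ : Equiv.Perm (Fin m)) : ℕ :=
  (Finset.univ.filter (fun p : Fin m × Fin m =>
    (p.1 : ℕ) + 1 = (p.2 : ℕ) ∧ (τ p.2 : ℕ) < (τ p.1 : ℕ))).card

lemma val_add_one' {m : ℕ} [NeZero m] (a : Fin m) (ha : (a : ℕ) + 1 < m) :
    ((a + 1 : Fin m) : ℕ) = (a : ℕ) + 1 := by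
  have h1 : (1 : Fin m).val = 1 % m := rfl
  have hm : 1 < m := lt_of_le_of_lt (Nat.le_add_left _ _) ha
  rw [Fin.add_def]
  simp only [h1, Nat.mod_eq_of_lt hm]
  exact Nat.mod_eq_of_lt ha

lemma descents_eq {m : ℕ} [NeZero m] (τ : Equiv.Perm (Fin m)) :
    descents τ = ∑ a : Fin m, (if (a : ℕ) + 1 < m ∧ (τ (a + 1) : ℕ) < (τ a : ℕ)
      then 1 else 0) := by
  rw [← Finset.card_filter]
  unfold descents
  apply Finset.card_bij (fun p _ => p.1)
  · intro p hp
    simp only [Finset.mem_filter, Finset.mem_univ, true_and] at hp ⊢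
    obtain ⟨h1, h2⟩ := hp
    have hlt : (p.1 : ℕ) + 1 < m := h1 ▸ p.2.isLt
    have hp2 : p.1 + 1 = p.2 := Fin.ext (by rw [val_add_one' _ hlt, h1])
    exact ⟨hlt, by rwa [hp2]⟩
  · intro p hp q hq hpq
    simp only [Finset.mem_filter, Finset.mem_univ, true_and] at hp hq
    have h2 : p.2 = q.2 := Fin.ext (by
      have e1 := hp.1; have e2 := hq.1
      have : (p.1 : ℕ) = (q.1 : ℕ) := congrArg Fin.val hpq
      omega)
    exact Prod.ext hpq h2
  · intro a ha
    simp only [Finset.mem_filter, Finset.mem_univ, true_and] at ha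
    refine ⟨(a, a + 1), ?_, rfl⟩
    simp only [Finset.mem_filter, Finset.mem_univ, true_and]
    exact ⟨(val_add_one' a ha.1).symm, ha.2⟩

lemma block_lt_iff {a b x y k : ℕ} (hx : x < k) (hy : y < k) (hab : a ≠ b) :
    a * k + x < b * k + y ↔ a < b := by
  constructor
  · intro hlt
    by_contra hba
    push_neg at hba
    have h1 : b + 1 ≤ a := lt_of_le_of_ne hba (Ne.symm hab)
    have h2 : (b + 1) * k ≤ a * k := Nat.mul_le_mul_right k h1
    rw [Nat.succ_mul] at h2
    omega
  · intro hlt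
    have h2 : (a + 1) * k ≤ b * k := Nat.mul_le_mul_right k hlt
    rw [Nat.succ_mul] at h2
    omega

/-- Descents of an element of the wreath product `S_k^n ⋊ S_n`, acting on `{0,…,kn−1}`
by permuting within the consecutive blocks of size `k` by the `γ_j` and then permuting
the `n` blocks by `h`, decompose as `d(π) = Σ_j d(γ_j) + d(h)`. -/
theorem stmt15 (k n : ℕ) (hk : 1 ≤ k) (hn : 1 ≤ n)
    (γ : Fin n → Equiv.Perm (Fin k)) (h : Equiv.Perm (Fin n))
    (π : Equiv.Perm (Fin (k * n)))
    -- π(j·k + i) = h(j)·k + γ_j(i)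
    (hπ : ∀ (i : Fin k) (j : Fin n) (hij : (j : ℕ) * k + (i : ℕ) < k * n),
      (π ⟨(j : ℕ) * k + (i : ℕ), hij⟩ : ℕ) = (h j : ℕ) * k + (γ j i : ℕ)) :
    descents π = (∑ j : Fin n, descents (γ j)) + descents h := by
  haveI : NeZero k := ⟨by omega⟩
  haveI : NeZero n := ⟨by omega⟩
  haveI : NeZero (k * n) := ⟨by positivity⟩
  set e : Fin n × Fin k ≃ Fin (k * n) :=
    finProdFinEquiv.trans (finCongr (Nat.mul_comm n k)) with he
  have heval : ∀ (j : Fin n) (i : Fin k),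
      ((e (j, i) : Fin (k * n)) : ℕ) = (j : ℕ) * k + (i : ℕ) := by
    intro j i
    simp [he, finProdFinEquiv, Nat.mul_comm, Nat.add_comm]
  set F : Fin (k * n) → ℕ := fun a =>
    if (a : ℕ) + 1 < k * n ∧ (π (a + 1) : ℕ) < (π a : ℕ) then 1 else 0 with hF
  have key : ∀ (j : Fin n) (i : Fin k),
      F (e (j, i)) =
        (if (i : ℕ) + 1 < k ∧ (γ j (i + 1) : ℕ) < (γ j i : ℕ) then 1 else 0) +
        (if (i : ℕ) + 1 = k ∧ (j : ℕ) + 1 < n ∧ (h (j + 1) : ℕ) < (h j : ℕ)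
          then 1 else 0) := by
    intro j i
    have hjk : (j : ℕ) * k + (i : ℕ) < k * n := by
      have h1 : (j : ℕ) * k + (i : ℕ) < ((j : ℕ) + 1) * k := by
        have := i.isLt; rw [Nat.succ_mul]; omega
      have h2 : ((j : ℕ) + 1) * k ≤ n * k := Nat.mul_le_mul_right k j.isLt
      rw [Nat.mul_comm k n]; omega
    have hea : e (j, i) = ⟨(j : ℕ) * k + (i : ℕ), hjk⟩ := Fin.ext (heval j i)
    have hv1 : (π (e (j, i)) : ℕ) = (h j : ℕ) * k + (γ j i : ℕ) := by
      rw [hea]; exact hπ i j hjk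
    rcases lt_or_eq_of_le (Nat.succ_le_of_lt i.isLt) with hi | hi
    · -- within block: i + 1 < k
      have hsuc : (j : ℕ) * k + (i : ℕ) + 1 < k * n := by
        have h1 : (j : ℕ) * k + ((i : ℕ) + 1) < ((j : ℕ) + 1) * k := by
          rw [Nat.succ_mul]; omega
        have h2 : ((j : ℕ) + 1) * k ≤ n * k := Nat.mul_le_mul_right k j.isLt
        rw [Nat.mul_comm k n]; omega
      have hi1 : ((i + 1 : Fin k) : ℕ) = (i : ℕ) + 1 := val_add_one' i hi
      have hnext : (e (j, i)) + 1 = ⟨(j : ℕ) * k + ((i + 1 : Fin k) : ℕ), by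
          rw [hi1]; omega⟩ := by
        apply Fin.ext
        rw [val_add_one' _ (by rw [heval]; exact hsuc)]
        simp only [heval, hi1]
        omega
      have hv2 : (π (e (j, i) + 1) : ℕ) = (h j : ℕ) * k + (γ j (i + 1) : ℕ) := by
        rw [hnext]; exact hπ (i + 1) j _
      have hcond : (((e (j, i)) : ℕ) + 1 < k * n ∧
            (π (e (j, i) + 1) : ℕ) < (π (e (j, i)) : ℕ))
          ↔ ((γ j (i + 1) : ℕ) < (γ j i : ℕ)) := by
        rw [hv1, hv2, heval]
        constructor
        · rintro ⟨-, h2⟩; omega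
        · intro h2; exact ⟨hsuc, by omega⟩
      rw [hF]
      simp only [hcond]
      by_cases hg : (γ j (i + 1) : ℕ) < (γ j i : ℕ)
      · rw [if_pos hg, if_pos ⟨hi, hg⟩, if_neg (by rintro ⟨h1, -⟩; omega)]
      · rw [if_neg hg, if_neg (by rintro ⟨-, h2⟩; exact hg h2),
          if_neg (by rintro ⟨h1, -⟩; omega)]
    · -- boundary: i + 1 = k
      have hA : ¬ ((i : ℕ) + 1 < k ∧ (γ j (i + 1) : ℕ) < (γ j i : ℕ)) := by
        rintro ⟨h1, -⟩; omega
      rcases lt_or_eq_of_le (Nat.succ_le_of_lt j.isLt) with hj | hj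
      · -- j + 1 < n
        have hsuc : (j : ℕ) * k + (i : ℕ) + 1 < k * n := by
          have h1 : (j : ℕ) * k + (i : ℕ) + 1 = ((j : ℕ) + 1) * k := by
            rw [Nat.succ_mul]; omega
          have h2 : ((j : ℕ) + 1) * k < n * k := by
            apply Nat.mul_lt_mul_of_lt_of_le hj (le_refl k); omega
          rw [Nat.mul_comm k n]; omega
        have hj1 : ((j + 1 : Fin n) : ℕ) = (j : ℕ) + 1 := val_add_one' j hj
        have hbnd : ((j + 1 : Fin n) : ℕ) * k + ((0 : Fin k) : ℕ) < k * n := by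
          simp only [hj1, Fin.val_zero]
          have h2 : ((j : ℕ) + 1) * k < n * k := by
            apply Nat.mul_lt_mul_of_lt_of_le hj (le_refl k); omega
          rw [Nat.mul_comm k n]; omega
        have hnext : (e (j, i)) + 1 =
            ⟨((j + 1 : Fin n) : ℕ) * k + ((0 : Fin k) : ℕ), hbnd⟩ := by
          apply Fin.ext
          rw [val_add_one' _ (by rw [heval]; exact hsuc)]
          simp only [heval, hj1, Fin.val_zero, Nat.succ_mul]
          omega
        have hv2 : (π (e (j, i) + 1) : ℕ) =
            (h (j + 1) : ℕ) * k + (γ (j + 1) 0 : ℕ) := by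
          rw [hnext]; exact hπ 0 (j + 1) hbnd
        have hne : (h (j + 1) : ℕ) ≠ (h j : ℕ) := by
          intro hcontra
          have : h (j + 1) = h j := Fin.ext hcontra
          have : (j + 1 : Fin n) = j := h.injective this
          have := congrArg Fin.val this
          rw [hj1] at this
          omega
        have hcond : (((e (j, i)) : ℕ) + 1 < k * n ∧
              (π (e (j, i) + 1) : ℕ) < (π (e (j, i)) : ℕ))
            ↔ ((h (j + 1) : ℕ) < (h j : ℕ)) := by
          rw [hv1, hv2, heval]
          rw [block_lt_iff (γ (j + 1) 0).isLt (γ j i).isLt hne]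
          constructor
          · rintro ⟨-, h2⟩; exact h2
          · intro h2; exact ⟨hsuc, h2⟩
        rw [hF]
        simp only [hcond]
        by_cases hg : (h (j + 1) : ℕ) < (h j : ℕ)
        · rw [if_pos hg, if_neg hA, if_pos ⟨hi, hj, hg⟩]
        · rw [if_neg hg, if_neg hA, if_neg (by rintro ⟨-, -, h2⟩; exact hg h2)]
      · -- j + 1 = n : last position, no descent counted
        have hlast : ¬ (((e (j, i)) : ℕ) + 1 < k * n) := by
          rw [heval]
          have : (j : ℕ) * k + (i : ℕ) + 1 = ((j : ℕ) + 1) * k := by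
            rw [Nat.succ_mul]; omega
          have hn' : (j : ℕ) + 1 = n := hj
          rw [this, hn', Nat.mul_comm]
          omega
        rw [hF]
        simp only []
        rw [if_neg (by rintro ⟨h1, -⟩; exact hlast h1)]
        rw [if_neg hA, if_neg (by rintro ⟨-, h1, -⟩; omega)]
  -- assemble
  have hsum : descents π = ∑ x : Fin n × Fin k, F (e x) := by
    rw [descents_eq π, Equiv.sum_comp e F]
  rw [hsum, Fintype.sum_prod_type]
  have hrow : ∀ j : Fin n, (∑ i : Fin k, F (e (j, i))) =
      descents (γ j) +
      (if (j : ℕ) + 1 < n ∧ (h (j + 1) : ℕ) < (h j : ℕ) then 1 else 0) := by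
    intro j
    simp only [key]
    rw [Finset.sum_add_distrib]
    congr 1
    · exact (descents_eq (γ j)).symm
    · rw [Finset.sum_eq_single_of_mem (⟨k - 1, by omega⟩ : Fin k)
        (Finset.mem_univ _)]
      · simp only [show (k - 1 : ℕ) + 1 = k by omega, true_and]
      · intro i _ hi
        rw [if_neg]
        rintro ⟨h1, -⟩
        exact hi (Fin.ext (by simp only []; omega))
  simp only [hrow]
  rw [Finset.sum_add_distrib]
  congr 1
  exact (descents_eq h).symm

end Stmt15
end

section
/- Fix k, n ≥ 1. For γ : Fin n → Perm(Fin k) and h ∈ Perm(Fin n), let π be the permutation of Fin(k·n) defined by π(j·k + i) = h(j)·k + γ_j(i) for 0 ≤ i < k, 0 ≤ j < n. Then the number of inversions decomposes exactly as I(π) = k²·I(h) + Σ_{j=0}^{n−1} I(γ_j), where for a permutation τ of Fin m, I(τ) = #{ (a,b) : 0 ≤ a < b < m and τ(a) > τ(b) }, comparisons being between the underlying natural numbers. -/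
open scoped BigOperators

namespace Stmt17

/-- The inversion number of a permutation of `Fin m`:
`I(τ) = #{ (a,b) : a < b, τ(a) > τ(b) }`. -/
def inversions {m : ℕ} (τ : Equiv.Perm (Fin m)) : ℕ :=
  (Finset.univ.filter (fun p : Fin m × Fin m =>
    (p.1 : ℕ) < (p.2 : ℕ) ∧ (τ p.2 : ℕ) < (τ p.1 : ℕ))).card

lemma block_lt_iff {k : ℕ} (j1 j2 i1 i2 : ℕ) (h1 : i1 < k) (h2 : i2 < k) :
    j1 * k + i1 < j2 * k + i2 ↔ j1 < j2 ∨ (j1 = j2 ∧ i1 < i2) := by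
  constructor
  · intro H
    rcases lt_trichotomy j1 j2 with hlt | heq | hgt
    · exact Or.inl hlt
    · subst heq
      exact Or.inr ⟨rfl, Nat.lt_of_add_lt_add_left H⟩
    · exfalso
      have : j2 * k + i2 < j1 * k + i1 := by
        calc j2 * k + i2 < j2 * k + k := by omega
        _ = (j2 + 1) * k := by ring
        _ ≤ j1 * k := Nat.mul_le_mul_right k (Nat.succ_le_of_lt hgt)
        _ ≤ j1 * k + i1 := Nat.le_add_right _ _
      omega
  · rintro (hlt | ⟨rfl, hlt⟩)
    · calc j1 * k + i1 < j1 * k + k := by omega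
      _ = (j1 + 1) * k := by ring
      _ ≤ j2 * k := Nat.mul_le_mul_right k (Nat.succ_le_of_lt hlt)
      _ ≤ j2 * k + i2 := Nat.le_add_right _ _
    · omega

lemma enc_lt {k n : ℕ} (j : Fin n) (i : Fin k) : (j : ℕ) * k + (i : ℕ) < k * n := by
  calc (j : ℕ) * k + (i : ℕ) < (j : ℕ) * k + k := by omega
  _ = ((j : ℕ) + 1) * k := by ring
  _ ≤ n * k := Nat.mul_le_mul_right k (Nat.succ_le_of_lt j.isLt)
  _ = k * n := Nat.mul_comm _ _

def E {k n : ℕ} (hk : 0 < k) : Fin n × Fin k ≃ Fin (k * n) where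
  toFun p := ⟨(p.1 : ℕ) * k + (p.2 : ℕ), enc_lt p.1 p.2⟩
  invFun a := (⟨(a : ℕ) / k, by
      rw [Nat.div_lt_iff_lt_mul hk]
      exact a.isLt.trans_le (Nat.mul_comm k n).le⟩,
    ⟨(a : ℕ) % k, Nat.mod_lt _ hk⟩)
  left_inv p := by
    obtain ⟨j, i⟩ := p
    simp only [Prod.mk.injEq]
    constructor
    · ext
      simp only
      rw [Nat.mul_comm, Nat.mul_add_div hk, Nat.div_eq_of_lt i.isLt, Nat.add_zero]
    · ext
      simp only
      rw [Nat.mul_comm, Nat.mul_add_mod, Nat.mod_eq_of_lt i.isLt]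
  right_inv a := by
    ext
    simp only
    exact Nat.div_add_mod' _ _

/-- Inversions of an element of the wreath product `S_k^n ⋊ S_n`, acting on `{0,…,kn−1}`
by permuting within the consecutive blocks of size `k` by the `γ_j` and then permuting
the `n` blocks by `h`, decompose as `I(π) = k²·I(h) + Σ_j I(γ_j)`. -/
theorem stmt17 (k n : ℕ) (hk : 1 ≤ k) (hn : 1 ≤ n)
    (γ : Fin n → Equiv.Perm (Fin k)) (h : Equiv.Perm (Fin n))
    (π : Equiv.Perm (Fin (k * n)))
    -- π(j·k + i) = h(j)·k + γ_j(i)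
    (hπ : ∀ (i : Fin k) (j : Fin n) (hij : (j : ℕ) * k + (i : ℕ) < k * n),
      (π ⟨(j : ℕ) * k + (i : ℕ), hij⟩ : ℕ) = (h j : ℕ) * k + (γ j i : ℕ)) :
    inversions π = k ^ 2 * inversions h + ∑ j : Fin n, inversions (γ j) := by
  classical
  have hk0 : 0 < k := hk
  set e : Fin n × Fin k ≃ Fin (k * n) := E hk0 with he
  -- value of π on encoded elements
  have hval : ∀ p : Fin n × Fin k, (π (e p) : ℕ) = (h p.1 : ℕ) * k + (γ p.1 p.2 : ℕ) := by
    intro p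
    exact hπ p.2 p.1 (enc_lt p.1 p.2)
  -- predicates on the product side
  set A : (Fin n × Fin k) × (Fin n × Fin k) → Prop := fun q =>
    (q.1.1 : ℕ) < (q.2.1 : ℕ) ∧ (h q.2.1 : ℕ) < (h q.1.1 : ℕ) with hA
  set B : (Fin n × Fin k) × (Fin n × Fin k) → Prop := fun q =>
    q.1.1 = q.2.1 ∧ (q.1.2 : ℕ) < (q.2.2 : ℕ) ∧ (γ q.1.1 q.2.2 : ℕ) < (γ q.1.1 q.1.2 : ℕ)
    with hB
  have hinj : ∀ a b : Fin n, (h a : ℕ) = (h b : ℕ) → a = b := by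
    intro a b hab
    exact h.injective (Fin.val_injective hab)
  -- key pointwise equivalence
  have key : ∀ q : (Fin n × Fin k) × (Fin n × Fin k),
      ((e q.1 : ℕ) < (e q.2 : ℕ) ∧ (π (e q.2) : ℕ) < (π (e q.1) : ℕ)) ↔ (A q ∨ B q) := by
    rintro ⟨⟨j1, i1⟩, ⟨j2, i2⟩⟩
    have e1 : (e (j1, i1) : ℕ) = (j1 : ℕ) * k + (i1 : ℕ) := rfl
    have e2 : (e (j2, i2) : ℕ) = (j2 : ℕ) * k + (i2 : ℕ) := rfl
    rw [e1, e2, hval (j1, i1), hval (j2, i2),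
      block_lt_iff _ _ _ _ i1.isLt i2.isLt,
      block_lt_iff _ _ _ _ (γ j2 i2).isLt (γ j1 i1).isLt]
    simp only [hA, hB]
    constructor
    · rintro ⟨h1 | ⟨h1, h1'⟩, h2 | ⟨h2, h2'⟩⟩
      · exact Or.inl ⟨h1, h2⟩
      · exfalso
        have := hinj _ _ h2
        subst this
        exact absurd h1 (lt_irrefl _)
      · exfalso
        have : j1 = j2 := Fin.val_injective h1
        subst this
        exact absurd h2 (lt_irrefl _)
      · have : j1 = j2 := Fin.val_injective h1
        subst this
        exact Or.inr ⟨rfl, h1', h2'⟩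
    · rintro (⟨h1, h2⟩ | ⟨h1, h2, h3⟩)
      · exact ⟨Or.inl h1, Or.inl h2⟩
      · subst h1
        exact ⟨Or.inr ⟨rfl, h2⟩, Or.inr ⟨rfl, h3⟩⟩
  -- step 1: transport the count along e
  have step1 : inversions π =
      (Finset.univ.filter (fun q : (Fin n × Fin k) × (Fin n × Fin k) => A q ∨ B q)).card := by
    unfold inversions
    rw [← Fintype.card_subtype, ← Fintype.card_subtype]
    refine Fintype.card_congr ?_
    refine (Equiv.subtypeEquiv (Equiv.prodCongr e e) (fun q => ?_)).symm
    exact (key q).symm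
  -- step 2: split the disjunction
  have hdisj : Disjoint
      (Finset.univ.filter (fun q : (Fin n × Fin k) × (Fin n × Fin k) => A q))
      (Finset.univ.filter (fun q : (Fin n × Fin k) × (Fin n × Fin k) => B q)) := by
    rw [Finset.disjoint_filter]
    rintro q _ ⟨h1, _⟩ ⟨h2, _⟩
    rw [h2] at h1
    exact absurd h1 (lt_irrefl _)
  have step2 : (Finset.univ.filter (fun q : (Fin n × Fin k) × (Fin n × Fin k) => A q ∨ B q)).card =
      (Finset.univ.filter (fun q : (Fin n × Fin k) × (Fin n × Fin k) => A q)).card +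
      (Finset.univ.filter (fun q : (Fin n × Fin k) × (Fin n × Fin k) => B q)).card := by
    rw [Finset.filter_or, Finset.card_union_of_disjoint hdisj]
  -- step 3: count A
  have step3 : (Finset.univ.filter (fun q : (Fin n × Fin k) × (Fin n × Fin k) => A q)).card =
      k ^ 2 * inversions h := by
    unfold inversions
    rw [show k ^ 2 * (Finset.univ.filter (fun p : Fin n × Fin n =>
        (p.1 : ℕ) < (p.2 : ℕ) ∧ (h p.2 : ℕ) < (h p.1 : ℕ))).card =
      ((Finset.univ.filter (fun p : Fin n × Fin n =>
        (p.1 : ℕ) < (p.2 : ℕ) ∧ (h p.2 : ℕ) < (h p.1 : ℕ))) ×ˢ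
        (Finset.univ : Finset (Fin k × Fin k))).card from ?_]
    · refine Finset.card_bij' (fun q _ => ((q.1.1, q.2.1), (q.1.2, q.2.2)))
        (fun q _ => ((q.1.1, q.2.1), (q.1.2, q.2.2))) ?_ ?_ ?_ ?_
      · rintro ⟨⟨j1, i1⟩, j2, i2⟩ hq
        simp only [Finset.mem_filter, Finset.mem_univ, true_and, hA] at hq
        simp only [Finset.mem_product, Finset.mem_filter, Finset.mem_univ, true_and, and_true]
        exact hq
      · rintro ⟨⟨j1, j2⟩, i1, i2⟩ hq
        simp only [Finset.mem_product, Finset.mem_filter, Finset.mem_univ, true_and, and_true] at hq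
        simp only [Finset.mem_filter, Finset.mem_univ, true_and, hA]
        exact hq
      · rintro ⟨⟨j1, i1⟩, j2, i2⟩ _; rfl
      · rintro ⟨⟨j1, j2⟩, i1, i2⟩ _; rfl
    · rw [Finset.card_product, Finset.card_univ, Fintype.card_prod, Fintype.card_fin]
      ring
  -- step 4: count B
  have step4 : (Finset.univ.filter (fun q : (Fin n × Fin k) × (Fin n × Fin k) => B q)).card =
      ∑ j : Fin n, inversions (γ j) := by
    unfold inversions
    rw [← Finset.card_sigma (Finset.univ : Finset (Fin n)) (fun j =>
      (Finset.univ.filter (fun p : Fin k × Fin k =>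
        (p.1 : ℕ) < (p.2 : ℕ) ∧ (γ j p.2 : ℕ) < (γ j p.1 : ℕ))))]
    refine Finset.card_bij' (fun q _ => ⟨q.1.1, (q.1.2, q.2.2)⟩)
      (fun s _ => ((s.1, s.2.1), (s.1, s.2.2))) ?_ ?_ ?_ ?_
    · rintro ⟨⟨j1, i1⟩, j2, i2⟩ hq
      simp only [Finset.mem_filter, Finset.mem_univ, true_and, hB] at hq
      simp only [Finset.mem_sigma, Finset.mem_filter, Finset.mem_univ, true_and]
      exact hq.2
    · rintro ⟨j, i1, i2⟩ hs
      simp only [Finset.mem_sigma, Finset.mem_filter, Finset.mem_univ, true_and] at hs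
      exact Finset.mem_filter.mpr ⟨Finset.mem_univ _, rfl, hs.1, hs.2⟩
    · rintro ⟨⟨j1, i1⟩, j2, i2⟩ hq
      simp only [Finset.mem_filter, Finset.mem_univ, true_and, hB] at hq
      obtain ⟨rfl, -⟩ := hq
      rfl
    · rintro ⟨j, i1, i2⟩ _; rfl
  rw [step1, step2, step3, step4]

end Stmt17
end
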